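/- arXiv:2311.02944 — 6 statements merged into one kernel-verified Lean document; each statement's English description precedes it below -/
import Mathlib

section
/- Let L be a first-order language with no relation symbols and no 0-ary function symbols, and M an idempotent L-structure with algebraic predecessor preorder ≤_M. Then M is naturally preordered if and only if for every n ≥ 1, every n-ary function symbol σ, every i ∈ M and every tuple (i_0,…,i_{n-1}) with i_k ≤_M i for all k, one has funMap σ (i_0,…,i_{n-1}) ≤_M i. -/
open FirstOrder

/-- `b` is an algebraic predecessor of `a` in one step: `a` is the value of some
`n`-ary operation (`n ≥ 1`) at a tuple having `b` among its components. -/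
def AlgPred {L : FirstOrder.Language} {M : Type*} (S : L.Structure M) (b a : M) : Prop :=
  ∃ n : ℕ, 0 < n ∧ ∃ (σ : L.Functions n) (t : Fin n → M) (k : Fin n),
    S.funMap σ t = a ∧ t k = b

/-- The algebraic predecessor preorder: the reflexive–transitive closure of `AlgPred`. -/
def AlgPredLE {L : FirstOrder.Language} {M : Type*} (S : L.Structure M) : M → M → Prop :=
  Relation.ReflTransGen (AlgPred S)

/-- A map is an `L`-homomorphism if it preserves every operation. -/
def IsAlgHom {L : FirstOrder.Language} {M N : Type*} (S : L.Structure M) (T : L.Structure N)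
    (f : M → N) : Prop :=
  ∀ (n : ℕ) (σ : L.Functions n) (t : Fin n → M), f (S.funMap σ t) = T.funMap σ (fun k => f (t k))

/-- An L-structure is idempotent if every operation of arity `n ≥ 1` applied to a
constant tuple returns its value. -/
def IsIdemStruct {L : FirstOrder.Language} {M : Type*} (S : L.Structure M) : Prop :=
  ∀ (n : ℕ), 0 < n → ∀ (σ : L.Functions n) (a : M), S.funMap σ (fun _ => a) = a

/-- An L-structure is naturally preordered if every operation of arity `n ≥ 1` is
isotone with respect to the algebraic predecessor preorder. -/
def IsNatPreordered {L : FirstOrder.Language} {M : Type*} (S : L.Structure M) : Prop :=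
  ∀ (n : ℕ), 0 < n → ∀ (σ : L.Functions n) (j i : Fin n → M),
    (∀ k, AlgPredLE S (j k) (i k)) → AlgPredLE S (S.funMap σ j) (S.funMap σ i)

/-- A subset is closed if it is closed under every operation of arity `n ≥ 1`. -/
def IsClosedSubset {L : FirstOrder.Language} {M : Type*} (S : L.Structure M) (X : Set M) : Prop :=
  ∀ (n : ℕ), 0 < n → ∀ (σ : L.Functions n) (t : Fin n → M), (∀ k, t k ∈ X) → S.funMap σ t ∈ X

/-- A congruence on an L-structure: an equivalence relation compatible with every
operation of arity `n ≥ 1`. -/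
def IsCongruence {L : FirstOrder.Language} {M : Type*} (S : L.Structure M)
    (Φ : M → M → Prop) : Prop :=
  Equivalence Φ ∧ ∀ (n : ℕ), 0 < n → ∀ (σ : L.Functions n) (x y : Fin n → M),
    (∀ k, Φ (x k) (y k)) → Φ (S.funMap σ x) (S.funMap σ y)

theorem algPredLE_apply_funMap {L : FirstOrder.Language} {M : Type*} (S : L.Structure M)
    {n : ℕ} (hn : 0 < n) (σ : L.Functions n) (t : Fin n → M) (k : Fin n) :
    AlgPredLE S (t k) (S.funMap σ t) :=
  Relation.ReflTransGen.single ⟨n, hn, σ, t, k, rfl, rfl⟩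

theorem IsNatPreordered.funMap_le_of_forall_le {L : FirstOrder.Language} {M : Type*}
    {S : L.Structure M} (hnat : IsNatPreordered S) (hidem : IsIdemStruct S)
    {n : ℕ} (hn : 0 < n) (σ : L.Functions n) {i : M} {t : Fin n → M}
    (ht : ∀ k, AlgPredLE S (t k) i) : AlgPredLE S (S.funMap σ t) i := by
  simpa only [hidem n hn σ i] using hnat n hn σ t (fun _ => i) ht

theorem isNatPreordered_of_forall_funMap_le {L : FirstOrder.Language} {M : Type*}
    {S : L.Structure M}
    (h : ∀ (n : ℕ), 0 < n → ∀ (σ : L.Functions n) (i : M) (t : Fin n → M),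
      (∀ k, AlgPredLE S (t k) i) → AlgPredLE S (S.funMap σ t) i) :
    IsNatPreordered S := fun n hn σ j i hji =>
  h n hn σ _ j fun k => (hji k).trans (algPredLE_apply_funMap S hn σ i k)

theorem stmt6_general (L : FirstOrder.Language) {M : Type*} (S : L.Structure M)
    (hidem : IsIdemStruct S) :
    IsNatPreordered S ↔
      ∀ (n : ℕ), 0 < n → ∀ (σ : L.Functions n) (i : M) (t : Fin n → M),
        (∀ k, AlgPredLE S (t k) i) → AlgPredLE S (S.funMap σ t) i :=
  ⟨fun hnat _ hn σ _ _ ht => hnat.funMap_le_of_forall_le hidem hn σ ht,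
    isNatPreordered_of_forall_funMap_le⟩

theorem stmt6 (L : FirstOrder.Language) (hrel : ∀ n, IsEmpty (L.Relations n))
    (h0 : IsEmpty (L.Functions 0)) {M : Type*} (S : L.Structure M)
    (hidem : IsIdemStruct S) :
    IsNatPreordered S ↔
      ∀ (n : ℕ), 0 < n → ∀ (σ : L.Functions n) (i : M) (t : Fin n → M),
        (∀ k, AlgPredLE S (t k) i) → AlgPredLE S (S.funMap σ t) i :=
  stmt6_general L S hidem
end

section
/- Let L be a first-order language with no relation symbols and no 0-ary function symbols, and M a naturally preordered idempotent L-structure with algebraic predecessor preorder ≤_M. Then: (i) the relation ≡_M defined by i ≡_M j ↔ (i ≤_M j and j ≤_M i) is a congruence on M; and (ii) for every n ≥ 1, every n-ary function symbol σ and every tuple (i_0,…,i_{n-1}), the element funMap σ (i_0,…,i_{n-1}) is a least upper bound of the i_k with respect to ≤_M: each i_k ≤_M funMap σ (i_0,…,i_{n-1}), and for every j ∈ M with i_k ≤_M j for all k one has funMap σ (i_0,…,i_{n-1}) ≤_M j. -/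
open FirstOrder

section AlgPredLE

variable {L : FirstOrder.Language} {M : Type*} {S : L.Structure M}

theorem algPredLE_funMap {n : ℕ} (hn : 0 < n) (σ : L.Functions n) (t : Fin n → M) (k : Fin n) :
    AlgPredLE S (t k) (S.funMap σ t) :=
  .single ⟨n, hn, σ, t, k, rfl, rfl⟩

theorem equivalence_algPredLE_antisymm :
    Equivalence (fun i j : M => AlgPredLE S i j ∧ AlgPredLE S j i) :=
  ⟨fun _ => ⟨.refl, .refl⟩, fun h => ⟨h.2, h.1⟩,
    fun h₁ h₂ => ⟨h₁.1.trans h₂.1, h₂.2.trans h₁.2⟩⟩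

theorem IsNatPreordered.isCongruence (hnat : IsNatPreordered S) :
    IsCongruence S (fun i j => AlgPredLE S i j ∧ AlgPredLE S j i) :=
  ⟨equivalence_algPredLE_antisymm, fun n hn σ x y h =>
    ⟨hnat n hn σ x y fun k => (h k).1, hnat n hn σ y x fun k => (h k).2⟩⟩

/-- Compare `σ(t)` with `σ(j, …, j)`, which equals `j` by idempotence. -/
theorem IsNatPreordered.funMap_algPredLE (hnat : IsNatPreordered S) (hidem : IsIdemStruct S)
    {n : ℕ} (hn : 0 < n) (σ : L.Functions n) {t : Fin n → M} {j : M}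
    (ht : ∀ k, AlgPredLE S (t k) j) : AlgPredLE S (S.funMap σ t) j := by
  simpa only [hidem n hn σ j] using hnat n hn σ t (fun _ => j) ht

end AlgPredLE

theorem stmt7_general (L : FirstOrder.Language) {M : Type*} (S : L.Structure M)
    (hidem : IsIdemStruct S) (hnat : IsNatPreordered S) :
    IsCongruence S (fun i j => AlgPredLE S i j ∧ AlgPredLE S j i) ∧
      ∀ (n : ℕ), 0 < n → ∀ (σ : L.Functions n) (t : Fin n → M),
        (∀ k, AlgPredLE S (t k) (S.funMap σ t)) ∧
          ∀ j : M, (∀ k, AlgPredLE S (t k) j) → AlgPredLE S (S.funMap σ t) j :=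
  ⟨hnat.isCongruence, fun _ hn σ t =>
    ⟨algPredLE_funMap hn σ t, fun _ => hnat.funMap_algPredLE hidem hn σ⟩⟩

theorem stmt7 (L : FirstOrder.Language) (hrel : ∀ n, IsEmpty (L.Relations n))
    (h0 : IsEmpty (L.Functions 0)) {M : Type*} (S : L.Structure M)
    (hidem : IsIdemStruct S) (hnat : IsNatPreordered S) :
    IsCongruence S (fun i j => AlgPredLE S i j ∧ AlgPredLE S j i) ∧
      ∀ (n : ℕ), 0 < n → ∀ (σ : L.Functions n) (t : Fin n → M),
        (∀ k, AlgPredLE S (t k) (S.funMap σ t)) ∧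
          ∀ j : M, (∀ k, AlgPredLE S (t k) j) → AlgPredLE S (S.funMap σ t) j :=
  stmt7_general L S hidem hnat
end

section
/- Let L be a first-order language with no relation symbols and no 0-ary function symbols, and M a naturally preordered idempotent L-structure with algebraic predecessor preorder ≤_M. Then for every i ∈ M, the set {j ∈ M | j ≤_M i and i ≤_M j} (the ≡_M-equivalence class of i) is a closed subset of M; in particular, M is a union of closed subsets. -/
open FirstOrder

section AlgPredLE

variable {L : FirstOrder.Language} {M : Type*} {S : L.Structure M}

theorem IsClosedSubset.inter {X Y : Set M} (hX : IsClosedSubset S X) (hY : IsClosedSubset S Y) :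
    IsClosedSubset S (X ∩ Y) :=
  fun n hn σ t ht => ⟨hX n hn σ t fun k => (ht k).1, hY n hn σ t fun k => (ht k).2⟩

/-- Isotonicity compares `funMap σ t` with `funMap σ (fun _ => i)`, which is `i` by idempotency. -/
theorem isClosedSubset_algPredLE_Iic (hidem : IsIdemStruct S) (hnat : IsNatPreordered S)
    (i : M) : IsClosedSubset S {j | AlgPredLE S j i} := fun n hn σ t ht =>
  hidem n hn σ i ▸ hnat n hn σ t (fun _ => i) ht

theorem isClosedSubset_algPredLE_Ici (hidem : IsIdemStruct S) (hnat : IsNatPreordered S)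
    (i : M) : IsClosedSubset S {j | AlgPredLE S i j} := fun n hn σ t ht =>
  hidem n hn σ i ▸ hnat n hn σ (fun _ => i) t ht

end AlgPredLE

theorem stmt8_general (L : FirstOrder.Language) {M : Type*} (S : L.Structure M)
    (hidem : IsIdemStruct S) (hnat : IsNatPreordered S) :
    (∀ i : M, IsClosedSubset S {j | AlgPredLE S j i ∧ AlgPredLE S i j}) ∧
      (⋃ i : M, {j | AlgPredLE S j i ∧ AlgPredLE S i j}) = Set.univ :=
  ⟨fun i => (isClosedSubset_algPredLE_Iic hidem hnat i).inter
      (isClosedSubset_algPredLE_Ici hidem hnat i),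
    Set.eq_univ_of_forall fun j => Set.mem_iUnion.2 ⟨j, .refl, .refl⟩⟩

theorem stmt8 (L : FirstOrder.Language) (hrel : ∀ n, IsEmpty (L.Relations n))
    (h0 : IsEmpty (L.Functions 0)) {M : Type*} (S : L.Structure M)
    (hidem : IsIdemStruct S) (hnat : IsNatPreordered S) :
    (∀ i : M, IsClosedSubset S {j | AlgPredLE S j i ∧ AlgPredLE S i j}) ∧
      (⋃ i : M, {j | AlgPredLE S j i ∧ AlgPredLE S i j}) = Set.univ :=
  stmt8_general L S hidem hnat
end

section
/- Let L be a first-order language with no relation symbols and no 0-ary function symbols, I a naturally preordered idempotent L-structure with algebraic predecessor preorder ≤_I, A an L-structure, and f : A → I an L-homomorphism. Then for every j ∈ I, the preimage f⁻¹({i ∈ I | i ≤_I j}) of the principal down-set of j is a closed subset of A. -/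
open FirstOrder

theorem IsClosedSubset.preimage {L : FirstOrder.Language} {M N : Type*} {S : L.Structure M}
    {T : L.Structure N} {f : M → N} (hf : IsAlgHom S T f) {X : Set N}
    (hX : IsClosedSubset T X) : IsClosedSubset S (f ⁻¹' X) := by
  intro n hn σ t ht
  rw [Set.mem_preimage, hf]
  exact hX n hn σ _ ht

/-- If `t k ≤ j` for all `k`, then `σ t ≤ σ (j, …, j) = j`. -/
theorem IsNatPreordered.isClosedSubset_setOf_algPredLE {L : FirstOrder.Language} {M : Type*}
    {S : L.Structure M} (hnat : IsNatPreordered S) (hidem : IsIdemStruct S) (j : M) :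
    IsClosedSubset S {i | AlgPredLE S i j} := by
  intro n hn σ t ht
  simpa only [Set.mem_ofPred_eq, hidem n hn σ j] using hnat n hn σ t (fun _ => j) ht

theorem stmt11_general (L : FirstOrder.Language) {I A : Type*} (SI : L.Structure I) (SA : L.Structure A)
    (hidem : IsIdemStruct SI) (hnat : IsNatPreordered SI)
    (f : A → I) (hf : IsAlgHom SA SI f) :
    ∀ j : I, IsClosedSubset SA (f ⁻¹' {i | AlgPredLE SI i j}) :=
  fun j => (hnat.isClosedSubset_setOf_algPredLE hidem j).preimage hf

theorem stmt11 (L : FirstOrder.Language) (hrel : ∀ n, IsEmpty (L.Relations n))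
    (h0 : IsEmpty (L.Functions 0)) {I A : Type*} (SI : L.Structure I) (SA : L.Structure A)
    (hidem : IsIdemStruct SI) (hnat : IsNatPreordered SI)
    (f : A → I) (hf : IsAlgHom SA SI f) :
    ∀ j : I, IsClosedSubset SA (f ⁻¹' {i | AlgPredLE SI i j}) :=
  stmt11_general L SI SA hidem hnat f hf
end

section
/- Let L be a first-order language with no relation symbols and no 0-ary function symbols, M an L-structure, and D : M → M → M a binary operation satisfying, for all x, y, z ∈ M, all n ≥ 1, all n-ary function symbols σ and all tuples (x_0,…,x_{n-1}) ∈ Mⁿ: (D1) D(x,x) = x; (D2) D(x, D(y,z)) = D(D(x,y), z); (D3) D(x, D(y,z)) = D(x, D(z,y)); (D4) D(funMap σ (x_0,…,x_{n-1}), y) = funMap σ (D(x_0,y),…,D(x_{n-1},y)); (D5) D(y, funMap σ (x_0,…,x_{n-1})) = D(y, Dₙ(x_0,…,x_{n-1})), where Dₙ(x_0,…,x_{n-1}) denotes the right-nested iterate D(x_0, D(x_1, …, D(x_{n-2}, x_{n-1})…)) (and D₁(x_0) = x_0). Define the relation Φ^D on M by Φ^D(x,y) ↔ (D(x,y) = x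 and D(y,x) = y). Then Φ^D is an equivalence relation on M which is a congruence on M and is moreover compatible with D: if Φ^D(x,x') and Φ^D(y,y') then Φ^D(D(x,y), D(x',y')). -/
open FirstOrder

/-- The right-nested iterate `Dₙ(x₀,…,xₙ) = D(x₀, D(x₁, …, D(x_{n-1}, xₙ)…))`
of a binary operation `D` (so `D₁(x₀) = x₀`). -/
def iterD {M : Type*} (D : M → M → M) : ∀ n : ℕ, (Fin (n + 1) → M) → M
  | 0, x => x 0
  | n + 1, x => D (x 0) (iterD D n (fun k => x k.succ))

theorem stmt12 (L : FirstOrder.Language) (hrel : ∀ n, IsEmpty (L.Relations n))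
    (h0 : IsEmpty (L.Functions 0)) {M : Type*} (S : L.Structure M)
    (D : M → M → M)
    (hD1 : ∀ x : M, D x x = x)
    (hD2 : ∀ x y z : M, D x (D y z) = D (D x y) z)
    (hD3 : ∀ x y z : M, D x (D y z) = D x (D z y))
    (hD4 : ∀ (n : ℕ) (σ : L.Functions (n + 1)) (x : Fin (n + 1) → M) (y : M),
      D (S.funMap σ x) y = S.funMap σ (fun k => D (x k) y))
    (hD5 : ∀ (n : ℕ) (σ : L.Functions (n + 1)) (x : Fin (n + 1) → M) (y : M),
      D y (S.funMap σ x) = D y (iterD D n x)) :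
    IsCongruence S (fun x y => D x y = x ∧ D y x = y) ∧
      ∀ x x' y y' : M, (D x x' = x ∧ D x' x = x') → (D y y' = y ∧ D y' y = y') →
        (D (D x y) (D x' y') = D x y ∧ D (D x' y') (D x y) = D x' y') := by

  set Φ : M → M → Prop := fun x y => D x y = x ∧ D y x = y with hΦ
  -- key absorption lemma
  have lem : ∀ a a' b b' : M, D a a' = a → D b b' = b →
      D (D a b) (D a' b') = D a b := by
    intro a a' b b' ha hb
    calc D (D a b) (D a' b') = D (D a b) (D b' a') := hD3 _ _ _
      _ = D (D (D a b) b') a' := hD2 _ _ _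
      _ = D (D a (D b b')) a' := by rw [hD2]
      _ = D (D a b) a' := by rw [hb]
      _ = D a (D b a') := (hD2 _ _ _).symm
      _ = D a (D a' b) := hD3 _ _ _
      _ = D (D a a') b := hD2 _ _ _
      _ = D a b := by rw [ha]
  have compat : ∀ a a' b b' : M, Φ a a' → Φ b b' → Φ (D a b) (D a' b') := by
    intro a a' b b' h1 h2
    exact ⟨lem a a' b b' h1.1 h2.1, lem a' a b' b h1.2 h2.2⟩
  have hrefl : ∀ a : M, Φ a a := fun a => ⟨hD1 a, hD1 a⟩
  have hsymm : ∀ {a b : M}, Φ a b → Φ b a := fun h => ⟨h.2, h.1⟩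
  have htrans : ∀ {a b c : M}, Φ a b → Φ b c → Φ a c := by
    rintro a b c ⟨hab, hba⟩ ⟨hbc, hcb⟩
    constructor
    · calc D a c = D (D a b) c := by rw [hab]
        _ = D a (D b c) := (hD2 _ _ _).symm
        _ = D a b := by rw [hbc]
        _ = a := hab
    · calc D c a = D (D c b) a := by rw [hcb]
        _ = D c (D b a) := (hD2 _ _ _).symm
        _ = D c b := by rw [hba]
        _ = c := hcb
  have hiter : ∀ (n : ℕ) (x y : Fin (n + 1) → M), (∀ k, Φ (x k) (y k)) →
      Φ (iterD D n x) (iterD D n y) := by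
    intro n
    induction n with
    | zero => intro x y h; exact h 0
    | succ m ih =>
      intro x y h
      exact compat _ _ _ _ (h 0) (ih _ _ (fun k => h k.succ))
  have hfun : ∀ (n : ℕ) (σ : L.Functions (n + 1)) (x : Fin (n + 1) → M),
      Φ (S.funMap σ x) (iterD D n x) := by
    intro n σ x
    constructor
    · rw [← hD5 n σ x (S.funMap σ x), hD1]
    · rw [hD5 n σ x (iterD D n x), hD1]
  refine ⟨⟨⟨hrefl, fun h => hsymm h, fun h h' => htrans h h'⟩, ?_⟩,
    fun x x' y y' h1 h2 => compat _ _ _ _ h1 h2⟩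
  intro n hn σ x y h
  match n, hn, σ, x, y, h with
  | (m+1), _, σ, x, y, h =>
    exact htrans (hfun m σ x) (htrans (hiter m x y h) (hsymm (hfun m σ y)))
end

section
/- Let L be a first-order language with no relation symbols, no 0-ary function symbols, and with at least one function symbol of arity ≥ 2. Let (I, ⊔) be a sup-semilattice, and endow I with the L-structure in which every n-ary function symbol (n ≥ 1) acts by funMap σ (i_0,…,i_{n-1}) = i_0 ⊔ i_1 ⊔ … ⊔ i_{n-1} (the join of the tuple). Then this L-structure is idempotent and naturally preordered, and its algebraic predecessor preorder ≤_I coincides with the semilattice partial order: for all a, b ∈ I, b ≤_I a (in the sense of the reflexive–transitive closure of the predecessor relation) if and only if b ≤ a in (I, ⊔). -/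
open FirstOrder

/-- The `L`-structure on a sup-semilattice `I` in which every operation of arity
`n ≥ 1` acts by taking the join of the tuple (there are no `0`-ary symbols). -/
def slStructure (L : FirstOrder.Language) (h0 : IsEmpty (L.Functions 0))
    (I : Type*) [SemilatticeSup I] : L.Structure I where
  funMap {n} σ t :=
    match n, σ, t with
    | 0, σ, _ => isEmptyElim σ
    | _ + 1, _, t => Finset.univ.sup' Finset.univ_nonempty t
  RelMap _ _ := False

namespace slStructure

variable {L : FirstOrder.Language} {h0 : IsEmpty (L.Functions 0)} {I : Type*} [SemilatticeSup I]

theorem funMap_le_iff {n : ℕ} (σ : L.Functions n) (t : Fin n → I) (a : I) :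
    (slStructure L h0 I).funMap σ t ≤ a ↔ ∀ k, t k ≤ a := by
  cases n with
  | zero => exact h0.elim σ
  | succ m => exact (Finset.sup'_le_iff Finset.univ_nonempty t).trans (by simp)

theorem le_funMap {n : ℕ} (σ : L.Functions n) (t : Fin n → I) (k : Fin n) :
    t k ≤ (slStructure L h0 I).funMap σ t :=
  (funMap_le_iff σ t _).mp le_rfl k

theorem le_of_algPred {a b : I} (h : AlgPred (slStructure L h0 I) b a) : b ≤ a := by
  obtain ⟨_, _, σ, t, k, rfl, rfl⟩ := h
  exact le_funMap σ t k

theorem le_of_algPredLE {a b : I} (h : AlgPredLE (slStructure L h0 I) b a) : b ≤ a := by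
  induction h with
  | refl => exact le_rfl
  | tail _ hstep ih => exact ih.trans (le_of_algPred hstep)

theorem algPred_of_le (hbin : ∃ n : ℕ, 2 ≤ n ∧ Nonempty (L.Functions n)) {a b : I}
    (hba : b ≤ a) : AlgPred (slStructure L h0 I) b a := by
  obtain ⟨n, hn, ⟨σ⟩⟩ := hbin
  obtain ⟨m, rfl⟩ := Nat.exists_eq_add_of_le' hn
  -- the join of `(b, a, a, …)` is `a`; this needs a second slot to hold `a`
  let t : Fin (m + 2) → I := fun k => if k = 0 then b else a
  have hjoin : (slStructure L h0 I).funMap σ t = a := by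
    refine le_antisymm ((funMap_le_iff σ t a).mpr fun k => ?_) (le_funMap σ t 1)
    by_cases hk : k = 0 <;> simp [t, hk, hba]
  exact ⟨m + 2, by omega, σ, t, 0, hjoin, rfl⟩

theorem algPredLE_iff_le (hbin : ∃ n : ℕ, 2 ≤ n ∧ Nonempty (L.Functions n)) (a b : I) :
    AlgPredLE (slStructure L h0 I) b a ↔ b ≤ a :=
  ⟨le_of_algPredLE, fun hba => .single (algPred_of_le hbin hba)⟩

theorem isIdemStruct : IsIdemStruct (slStructure L h0 I) := fun _ hn σ a =>
  le_antisymm ((funMap_le_iff σ _ a).mpr fun _ => le_rfl) (le_funMap σ (fun _ => a) ⟨0, hn⟩)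

theorem funMap_mono {n : ℕ} (σ : L.Functions n) {j i : Fin n → I} (h : ∀ k, j k ≤ i k) :
    (slStructure L h0 I).funMap σ j ≤ (slStructure L h0 I).funMap σ i :=
  (funMap_le_iff σ j _).mpr fun k => (h k).trans (le_funMap σ i k)

end slStructure

theorem stmt13_general (L : FirstOrder.Language)
    (h0 : IsEmpty (L.Functions 0))
    (hbin : ∃ n : ℕ, 2 ≤ n ∧ Nonempty (L.Functions n))
    (I : Type*) [SemilatticeSup I] :
    IsIdemStruct (slStructure L h0 I) ∧ IsNatPreordered (slStructure L h0 I) ∧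
      ∀ a b : I, AlgPredLE (slStructure L h0 I) b a ↔ b ≤ a := by
  have hle := slStructure.algPredLE_iff_le (h0 := h0) (I := I) hbin
  refine ⟨slStructure.isIdemStruct, fun _ _ σ j i hji => ?_, hle⟩
  rw [hle]
  exact slStructure.funMap_mono σ fun k => (hle _ _).mp (hji k)

theorem stmt13 (L : FirstOrder.Language) (hrel : ∀ n, IsEmpty (L.Relations n))
    (h0 : IsEmpty (L.Functions 0))
    (hbin : ∃ n : ℕ, 2 ≤ n ∧ Nonempty (L.Functions n))
    (I : Type*) [SemilatticeSup I] :
    IsIdemStruct (slStructure L h0 I) ∧ IsNatPreordered (slStructure L h0 I) ∧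
      ∀ a b : I, AlgPredLE (slStructure L h0 I) b a ↔ b ≤ a :=
  stmt13_general L h0 hbin I
end
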